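/- arXiv:2510.19711 — 2 statements merged into one kernel-verified Lean document; each statement's English description precedes it below -/
import Mathlib

section
/- Let (X,T) be a topological dynamical system, (μ_m) a sequence of ergodic T-invariant measures, and μ a T-invariant measure with ρ̄(μ_m, μ) → 0 as m → ∞, where ρ̄ is the joining infimum metric. Then μ is ergodic. -/
/-!
Suppose `s` is a `T`-invariant set with `0 < μ s < 1`, and write `μ_s = μ[|s]`,
`μ_sᶜ = μ[|sᶜ]`. Take a joining `λ` of an ergodic `μ_m` with `μ` of small cost `∫ ρ dλ`.
Conditioning `λ` on `X × s` gives a joining-like measure whose first marginal is invariant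
and absolutely continuous with respect to the ergodic `μ_m`, hence equal to `μ_m`; the same holds
for `X × sᶜ`. Gluing the two conditioned measures along their common first marginal `μ_m`
produces a coupling of `μ_s` and `μ_sᶜ` of cost at most `((μ s)⁻¹ + (μ sᶜ)⁻¹) ∫ ρ dλ`.
Letting `ρ̄(μ_m, μ) → 0`, the measures `μ_s` and `μ_sᶜ` admit couplings of arbitrarily small cost,
so they coincide, which is absurd since they are carried by the disjoint sets `s` and `sᶜ`.
-/

open MeasureTheory Filter

/-- A joining of two `T`-invariant measures. -/
def IsJoining {X : Type*} [MeasurableSpace X] (T : X → X) (μ ν : Measure X)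
    (lam : Measure (X × X)) : Prop :=
  IsProbabilityMeasure lam ∧ Measure.map (Prod.map T T) lam = lam ∧
    Measure.map Prod.fst lam = μ ∧ Measure.map Prod.snd lam = ν

/-- The `ρ̄` distance: infimum of `∫ ρ` over joinings. -/
noncomputable def rhoBar {X : Type*} [MetricSpace X] [MeasurableSpace X] (T : X → X)
    (μ ν : Measure X) : ℝ :=
  sInf {r : ℝ | ∃ lam : Measure (X × X), IsJoining T μ ν lam ∧ r = ∫ p, dist p.1 p.2 ∂lam}

open ProbabilityTheory Set
open scoped ENNReal NNReal Topology

lemma LipschitzWith.coe_le_add_mul_edist {X : Type*} [PseudoEMetricSpace X] {K : ℝ≥0}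
    {f : X → ℝ≥0} (hf : LipschitzWith K f) (x y : X) :
    (f x : ℝ≥0∞) ≤ f y + K * edist x y := by
  have hxy : (f x : ℝ≥0∞) ≤ f y + edist (f x) (f y) := by
    rw [edist_nndist, ← ENNReal.coe_add, ENNReal.coe_le_coe, ← NNReal.coe_le_coe, NNReal.coe_add,
      coe_nndist, NNReal.dist_eq]
    linarith [le_abs_self ((f x : ℝ) - f y)]
  exact hxy.trans (add_le_add_right (hf.edist_le_mul x y) _)

section Coupling

variable {X : Type*} [PseudoEMetricSpace X] [MeasurableSpace X]

lemma lintegral_fst_le_of_lipschitzWith [OpensMeasurableSpace X] {K : ℝ≥0} {f : X → ℝ≥0}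
    (hf : LipschitzWith K f) (π : Measure (X × X)) :
    ∫⁻ x, f x ∂π.fst ≤ ∫⁻ x, f x ∂π.snd + K * ∫⁻ p, edist p.1 p.2 ∂π := by
  have hfm : Measurable fun x => (f x : ℝ≥0∞) := hf.continuous.measurable.coe_nnreal_ennreal
  rw [Measure.fst, Measure.snd, lintegral_map hfm measurable_fst, lintegral_map hfm measurable_snd,
    ← lintegral_const_mul' _ _ ENNReal.coe_ne_top,
    ← lintegral_add_left (f := fun p : X × X => (f p.2 : ℝ≥0∞)) (hfm.comp measurable_snd)]
  exact lintegral_mono fun p => hf.coe_le_add_mul_edist p.1 p.2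

lemma measure_le_of_forall_exists_coupling [OpensMeasurableSpace X] {ν₁ ν₂ : Measure X}
    [IsFiniteMeasure ν₂]
    (h : ∀ ε > 0, ∃ π : Measure (X × X), π.fst = ν₁ ∧ π.snd = ν₂ ∧ ∫⁻ p, edist p.1 p.2 ∂π ≤ ε)
    {F : Set X} (hF : IsClosed F) : ν₁ F ≤ ν₂ F := by
  have hδ (n : ℕ) : (0 : ℝ) < 1 / (n + 1) := Nat.one_div_pos_of_nat
  refine ge_of_tendsto' (tendsto_lintegral_thickenedIndicator_of_isClosed ν₂ hF hδ
    tendsto_one_div_add_atTop_nhds_zero_nat) fun n => ?_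
  refine (measure_le_lintegral_thickenedIndicator ν₁ hF.measurableSet (hδ n)).trans ?_
  set K := (1 / ((n : ℝ) + 1)).toNNReal⁻¹
  refine ENNReal.le_of_forall_pos_le_add fun ε hε _ => ?_
  obtain ⟨π, rfl, rfl, hπ⟩ :=
    h (ε / K) (ENNReal.div_pos (by exact_mod_cast hε.ne') ENNReal.coe_ne_top)
  calc _ ≤ _ := lintegral_fst_le_of_lipschitzWith (lipschitzWith_thickenedIndicator (hδ n) F) π
    _ ≤ _ := by
      gcongr
      exact ENNReal.mul_le_of_le_div' hπ

lemma exists_coupling_swap {ν₁ ν₂ : Measure X} {ε : ℝ≥0∞}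
    (h : ∃ π : Measure (X × X), π.fst = ν₁ ∧ π.snd = ν₂ ∧ ∫⁻ p, edist p.1 p.2 ∂π ≤ ε) :
    ∃ π : Measure (X × X), π.fst = ν₂ ∧ π.snd = ν₁ ∧ ∫⁻ p, edist p.1 p.2 ∂π ≤ ε := by
  obtain ⟨π, rfl, rfl, hπ⟩ := h
  refine ⟨π.map Prod.swap, Measure.fst_map_swap, Measure.snd_map_swap, ?_⟩
  refine ((lintegral_map_equiv _ MeasurableEquiv.prodComm).trans ?_).trans_le hπ
  exact lintegral_congr fun p => edist_comm _ _

lemma measure_eq_of_forall_exists_coupling [BorelSpace X] {ν₁ ν₂ : Measure X}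
    [IsFiniteMeasure ν₁] [IsFiniteMeasure ν₂]
    (h : ∀ ε > 0, ∃ π : Measure (X × X), π.fst = ν₁ ∧ π.snd = ν₂ ∧ ∫⁻ p, edist p.1 p.2 ∂π ≤ ε) :
    ν₁ = ν₂ := by
  have hclosed {F : Set X} (hF : IsClosed F) : ν₁ F = ν₂ F :=
    le_antisymm (measure_le_of_forall_exists_coupling h hF)
      (measure_le_of_forall_exists_coupling (fun ε hε => exists_coupling_swap (h ε hε)) hF)
  refine ext_of_generate_finite _ ?_ isPiSystem_isClosed (fun F hF => hclosed hF)
    (hclosed isClosed_univ)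
  rw [BorelSpace.measurable_eq (α := X), borel_eq_generateFrom_isClosed]

/-- The gluing lemma: `π` is the law of `(Y₁, Y₂)` where `(Z, Y₁) ∼ π₁`, `(Z, Y₂) ∼ π₂` and
`Y₁, Y₂` are conditionally independent given `Z`. -/
lemma exists_coupling_lintegral_edist_le_add [SecondCountableTopology X] [OpensMeasurableSpace X]
    [StandardBorelSpace X] [Nonempty X] {π₁ π₂ : Measure (X × X)} [IsFiniteMeasure π₁]
    [IsFiniteMeasure π₂] (h : π₁.fst = π₂.fst) :
    ∃ π : Measure (X × X), π.fst = π₁.snd ∧ π.snd = π₂.snd ∧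
      ∫⁻ p, edist p.1 p.2 ∂π ≤ ∫⁻ p, edist p.1 p.2 ∂π₁ + ∫⁻ p, edist p.1 p.2 ∂π₂ := by
  set ρ := π₁.fst ⊗ₘ (π₁.condKernel ×ₖ π₂.condKernel)
  have hρ₁ : ρ.map (Prod.map id Prod.fst) = π₁ := by
    rw [← Measure.compProd_map measurable_fst, ← Kernel.fst_eq, Kernel.fst_prod,
      Measure.disintegrate]
  have hρ₂ : ρ.map (Prod.map id Prod.snd) = π₂ := by
    rw [← Measure.compProd_map measurable_snd, ← Kernel.snd_eq, Kernel.snd_prod, h,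
      Measure.disintegrate]
  refine ⟨ρ.snd, ?_, ?_, ?_⟩
  · rw [← hρ₁, Measure.fst, Measure.snd, Measure.snd, Measure.map_map measurable_fst measurable_snd,
      Measure.map_map measurable_snd (by fun_prop)]
    rfl
  · rw [← hρ₂, Measure.snd, Measure.snd, Measure.snd, Measure.map_map measurable_snd measurable_snd,
      Measure.map_map measurable_snd (by fun_prop)]
    rfl
  · calc ∫⁻ p, edist p.1 p.2 ∂ρ.snd = ∫⁻ q, edist q.2.1 q.2.2 ∂ρ :=
          lintegral_map (by fun_prop) measurable_snd
      _ ≤ ∫⁻ q, edist q.2.1 q.1 + edist q.1 q.2.2 ∂ρ :=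
          lintegral_mono fun q => edist_triangle _ _ _
      _ = ∫⁻ q, edist q.2.1 q.1 ∂ρ + ∫⁻ q, edist q.1 q.2.2 ∂ρ :=
          lintegral_add_left (by fun_prop) _
      _ = ∫⁻ p, edist p.1 p.2 ∂π₁ + ∫⁻ p, edist p.1 p.2 ∂π₂ := by
          rw [← hρ₁, ← hρ₂, lintegral_map (by fun_prop) (by fun_prop),
            lintegral_map (by fun_prop) (by fun_prop)]
          simp [edist_comm]

end Coupling

section Conditioning

variable {α β : Type*} [MeasurableSpace α] [MeasurableSpace β]

lemma map_cond_preimage {μ : Measure α} {f : α → β} (hf : Measurable f) {s : Set β}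
    (hs : MeasurableSet s) : (μ[|f ⁻¹' s]).map f = (μ.map f)[|s] := by
  rw [ProbabilityTheory.cond, ProbabilityTheory.cond, Measure.map_smul,
    ← Measure.restrict_map hf hs, Measure.map_apply hf hs]

lemma lintegral_cond_le (μ : Measure α) (s : Set α) (g : α → ℝ≥0∞) :
    ∫⁻ x, g x ∂μ[|s] ≤ (μ s)⁻¹ * ∫⁻ x, g x ∂μ := by
  rw [ProbabilityTheory.cond, lintegral_smul_measure, smul_eq_mul]
  gcongr
  exact Measure.restrict_le_self

lemma MeasureTheory.MeasurePreserving.fst_of_prodMap {ρ : Measure (α × β)} {f : α → α}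
    {g : β → β} (hf : Measurable f) (h : MeasurePreserving (Prod.map f g) ρ ρ) :
    MeasurePreserving f ρ.fst ρ.fst := by
  refine ⟨hf, ?_⟩
  rw [Measure.fst, Measure.map_map hf measurable_fst]
  change ρ.map (Prod.fst ∘ Prod.map f g) = _
  rw [← Measure.map_map measurable_fst h.measurable, h.map_eq]

lemma Ergodic.fst_cond_preimage_snd {f : α → α} {π : Measure (α × α)} [IsProbabilityMeasure π]
    (hf : Ergodic f π.fst) (hπ : MeasurePreserving (Prod.map f f) π π) {t : Set α}
    (ht : MeasurableSet t) (hft : f ⁻¹' t = t) (h0 : π (Prod.snd ⁻¹' t) ≠ 0) :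
    (π[|Prod.snd ⁻¹' t]).fst = π.fst := by
  have : IsProbabilityMeasure π[|Prod.snd ⁻¹' t] := cond_isProbabilityMeasure h0
  have hinv : MeasurePreserving (Prod.map f f) π[|Prod.snd ⁻¹' t] π[|Prod.snd ⁻¹' t] := by
    have h := (hπ.restrict_preimage (measurable_snd ht)).smul_measure (π (Prod.snd ⁻¹' t))⁻¹
    have hpre : Prod.map f f ⁻¹' (Prod.snd ⁻¹' t) = Prod.snd ⁻¹' t :=
      congrArg (Prod.snd ⁻¹' ·) hft
    rwa [hpre] at h
  exact hf.eq_of_absolutelyContinuous (hinv.fst_of_prodMap hf.measurable)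
    (cond_absolutelyContinuous.map measurable_fst)

end Conditioning

section Joining

variable {X : Type*} [MeasurableSpace X] {T : X → X}

lemma isJoining_prod (hT : Measurable T) {κ ν : Measure X} [IsProbabilityMeasure κ]
    [IsProbabilityMeasure ν] (hκ : κ.map T = κ) (hν : ν.map T = ν) :
    IsJoining T κ ν (κ.prod ν) :=
  ⟨inferInstance, by rw [← Measure.map_prod_map _ _ hT hT, hκ, hν], Measure.fst_prod,
    Measure.snd_prod⟩

lemma exists_coupling_cond_of_isJoining [PseudoEMetricSpace X] [SecondCountableTopology X]
    [OpensMeasurableSpace X] [StandardBorelSpace X] [Nonempty X] {κ μ : Measure X}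
    (hκ : Ergodic T κ) {lam : Measure (X × X)} (hlam : IsJoining T κ μ lam) {s : Set X}
    (hs : MeasurableSet s) (hTs : T ⁻¹' s = s) (h0 : μ s ≠ 0) (h0c : μ sᶜ ≠ 0) :
    ∃ π : Measure (X × X), π.fst = μ[|s] ∧ π.snd = μ[|sᶜ] ∧
      ∫⁻ p, edist p.1 p.2 ∂π ≤ ((μ s)⁻¹ + (μ sᶜ)⁻¹) * ∫⁻ p, edist p.1 p.2 ∂lam := by
  obtain ⟨hprob, hinv, hfst, hsnd⟩ := hlam
  change lam.fst = κ at hfst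
  change lam.snd = μ at hsnd
  have hπ : MeasurePreserving (Prod.map T T) lam lam := ⟨hκ.measurable.prodMap hκ.measurable, hinv⟩
  have hmass {t : Set X} (ht : MeasurableSet t) : lam (Prod.snd ⁻¹' t) = μ t := by
    rw [← hsnd, Measure.snd_apply ht]
  have hTsc : T ⁻¹' sᶜ = sᶜ := by rw [preimage_compl, hTs]
  rw [← hfst] at hκ
  have h₁ := hκ.fst_cond_preimage_snd hπ hs hTs (by rwa [hmass hs])
  have h₂ := hκ.fst_cond_preimage_snd hπ hs.compl hTsc (by rwa [hmass hs.compl])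
  have : IsProbabilityMeasure lam[|Prod.snd ⁻¹' s] := cond_isProbabilityMeasure (by rwa [hmass hs])
  have : IsProbabilityMeasure lam[|Prod.snd ⁻¹' sᶜ] :=
    cond_isProbabilityMeasure (by rwa [hmass hs.compl])
  obtain ⟨π, hπ₁, hπ₂, hcost⟩ := exists_coupling_lintegral_edist_le_add (h₁.trans h₂.symm)
  refine ⟨π, ?_, ?_, hcost.trans ?_⟩
  · rw [hπ₁, Measure.snd, map_cond_preimage measurable_snd hs, ← Measure.snd, hsnd]
  · rw [hπ₂, Measure.snd, map_cond_preimage measurable_snd hs.compl, ← Measure.snd, hsnd]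
  · rw [add_mul, ← hmass hs, ← hmass hs.compl]
    exact add_le_add (lintegral_cond_le _ _ _) (lintegral_cond_le _ _ _)

variable [MetricSpace X]

lemma exists_isJoining_integral_dist_lt {κ ν : Measure X} {r : ℝ}
    (hne : ∃ lam, IsJoining T κ ν lam) (h : rhoBar T κ ν < r) :
    ∃ lam, IsJoining T κ ν lam ∧ ∫ p, dist p.1 p.2 ∂lam < r := by
  obtain ⟨lam, hlam⟩ := hne
  have hbdd : BddBelow {r : ℝ | ∃ lam, IsJoining T κ ν lam ∧ r = ∫ p, dist p.1 p.2 ∂lam} :=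
    ⟨0, by rintro _ ⟨lam, -, rfl⟩; exact integral_nonneg fun p => dist_nonneg⟩
  obtain ⟨_, ⟨lam, hlam, rfl⟩, hlt⟩ := (csInf_lt_iff hbdd ⟨_, lam, hlam, rfl⟩).mp h
  exact ⟨lam, hlam, hlt⟩

variable [CompactSpace X] [BorelSpace X]

lemma lintegral_edist_eq_ofReal_integral_dist (π : Measure (X × X)) [IsFiniteMeasure π] :
    ∫⁻ p, edist p.1 p.2 ∂π = ENNReal.ofReal (∫ p, dist p.1 p.2 ∂π) := by
  rw [ofReal_integral_eq_lintegral_ofReal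
    ((continuous_fst.dist continuous_snd).integrable_of_hasCompactSupport
      (HasCompactSupport.of_compactSpace _)) (ae_of_all _ fun p => dist_nonneg)]
  simp_rw [edist_dist]

lemma exists_isJoining_lintegral_edist_lt (hT : Measurable T) {μm : ℕ → Measure X}
    [∀ m, IsProbabilityMeasure (μm m)] (hμm : ∀ m, (μm m).map T = μm m) {μ : Measure X}
    [IsProbabilityMeasure μ] (hμ : μ.map T = μ)
    (hconv : Tendsto (fun m => rhoBar T (μm m) μ) atTop (𝓝 0)) {ε : ℝ≥0∞} (hε : 0 < ε) :
    ∃ m lam, IsJoining T (μm m) μ lam ∧ ∫⁻ p, edist p.1 p.2 ∂lam < ε := by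
  obtain ⟨r, -, hr, hrε⟩ := ENNReal.lt_iff_exists_real_btwn.mp hε
  obtain ⟨m, hm⟩ := (hconv.eventually (gt_mem_nhds (ENNReal.ofReal_pos.mp hr))).exists
  obtain ⟨lam, hlam, hcost⟩ :=
    exists_isJoining_integral_dist_lt ⟨_, isJoining_prod hT (hμm m) hμ⟩ hm
  have := hlam.1
  refine ⟨m, lam, hlam, ?_⟩
  rw [lintegral_edist_eq_ofReal_integral_dist]
  exact ((ENNReal.ofReal_lt_ofReal_iff (ENNReal.ofReal_pos.mp hr)).mpr hcost).trans hrε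

end Joining

/-- a `ρ̄`-limit of ergodic measures is ergodic. -/
theorem stmt16 {X : Type*} [MetricSpace X] [CompactSpace X]
    [MeasurableSpace X] [BorelSpace X] (T : X ≃ₜ X)
    (μm : ℕ → Measure X) (hprob : ∀ m, IsProbabilityMeasure (μm m))
    (herg : ∀ m, Ergodic (⇑T) (μm m))
    (μ : Measure X) [IsProbabilityMeasure μ] (hinv : Measure.map (⇑T) μ = μ)
    (hconv : Tendsto (fun m => rhoBar (⇑T) (μm m) μ) atTop (nhds 0)) :
    Ergodic (⇑T) μ := by
  have : Nonempty X := nonempty_of_isProbabilityMeasure μ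
  refine ⟨⟨T.measurable, hinv⟩, ⟨fun s hs hTs => ?_⟩⟩
  by_contra hne
  obtain ⟨h0, h0c⟩ : μ s ≠ 0 ∧ μ sᶜ ≠ 0 := by
    simpa [eventuallyConst_set, ae_iff, and_comm] using! hne
  have hcoupling : ∀ ε > 0, ∃ π : Measure (X × X), π.fst = μ[|s] ∧ π.snd = μ[|sᶜ] ∧
      ∫⁻ p, edist p.1 p.2 ∂π ≤ ε := by
    intro ε hε
    have hC : (μ s)⁻¹ + (μ sᶜ)⁻¹ ≠ ∞ := by simp [h0, h0c]
    obtain ⟨m, lam, hlam, hcost⟩ := exists_isJoining_lintegral_edist_lt T.measurable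
      (fun m => (herg m).map_eq) hinv hconv (ENNReal.div_pos hε.ne' hC)
    obtain ⟨π, hπ₁, hπ₂, hπ⟩ := exists_coupling_cond_of_isJoining (herg m) hlam hs hTs h0 h0c
    exact ⟨π, hπ₁, hπ₂, hπ.trans (ENNReal.mul_le_of_le_div' hcost.le)⟩
  have hs_eq : μ[s|s] = μ[s|sᶜ] := by rw [measure_eq_of_forall_exists_coupling hcoupling]
  simp [cond_apply hs.compl, h0] at hs_eq
end

section
/- Let (X,T) be a topological dynamical system and let 𝒞 be a class of measure-preserving systems. Suppose (μ_m) is a sequence of ergodic T-invariant measures each of which is disjoint from every ergodic member of 𝒞 (i.e., the product measure is the only joining), and ρ̄(μ_m, μ) → 0 for some μ ∈ M_T(X). Then μ is also disjoint from every ergodic member of 𝒞: for every strictly ergodic system (Y,S) with unique invariant measure ν isomorphic to a member of 𝒞, every ergodic joining λ of μ and ν equals μ × ν. -/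
/-!
Let `λ` be a joining of `μ` and `ν`, and `σ` a joining of `μ` and `μₘ` with small `∫ ρ dσ`. The
relatively independent joining `θ` of `σ` and `λ` over their common `μ`-coordinate projects, on the
`(μₘ, ν)`-coordinates, to a joining of `μₘ` and `ν`, which by disjointness is `μₘ × ν`. Comparing
the `μ`- and `μₘ`-coordinates of `θ` then shows that for a `K`-Lipschitz `f` and a set `B`,
`∫_{X × B} f(x) dλ` is within `2K ∫ ρ dσ` of `ν(B) ∫ f dμ`. As `ρ̄(μₘ, μ) → 0` the two agree, and
bounded Lipschitz functions determine a finite Borel measure, so `λ(· × B) = ν(B) μ` for every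
`B`, i.e. `λ = μ × ν`.
-/

open MeasureTheory Filter

/-- A joining of `μ ∈ M_T(X)` and `ν ∈ M_S(Y)`. -/
def IsJoining2 {X Y : Type*} [MeasurableSpace X] [MeasurableSpace Y] (T : X → X) (S : Y → Y)
    (μ : Measure X) (ν : Measure Y) (lam : Measure (X × Y)) : Prop :=
  IsProbabilityMeasure lam ∧ Measure.map (Prod.map T S) lam = lam ∧
    Measure.map Prod.fst lam = μ ∧ Measure.map Prod.snd lam = ν

open ProbabilityTheory Set
open scoped NNReal

section RelativeProduct

variable {α β γ : Type*} [MeasurableSpace α] [MeasurableSpace β] [MeasurableSpace γ]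

theorem MeasureTheory.Measure.map_prodMap_compProd {μ : Measure α} [SFinite μ] {T : α ≃ᵐ α}
    (hT : MeasurePreserving T μ μ) (η : Kernel α β) [IsSFiniteKernel η] {U : β → β}
    (hU : Measurable U) :
    (μ ⊗ₘ η).map (Prod.map T U) = μ ⊗ₘ (η.map U).comap T.symm T.symm.measurable := by
  ext s hs
  rw [Measure.map_apply (T.measurable.prodMap hU) hs,
    Measure.compProd_apply (hs.preimage (T.measurable.prodMap hU)), Measure.compProd_apply hs]
  conv_rhs => rw [← hT.map_eq, lintegral_map_equiv]
  refine lintegral_congr fun a => ?_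
  rw [Kernel.comap_apply, Kernel.map_apply _ hU, Measure.map_apply hU (measurable_prodMk_left hs),
    T.symm_apply_apply]
  rfl

theorem MeasureTheory.Measure.measurePreserving_fst_of_map_prodMap {ρ : Measure (α × β)}
    {T : α → α} {U : β → β} (hT : Measurable T) (hU : Measurable U)
    (hρ : ρ.map (Prod.map T U) = ρ) : MeasurePreserving T ρ.fst ρ.fst := by
  refine ⟨hT, ?_⟩
  conv_rhs => rw [← hρ]
  rw [Measure.fst, Measure.fst, Measure.map_map hT measurable_fst,
    Measure.map_map measurable_fst (hT.prodMap hU)]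
  rfl

theorem MeasureTheory.Measure.condKernel_map_comap_ae_eq [StandardBorelSpace β] [Nonempty β]
    {ρ : Measure (α × β)} [IsFiniteMeasure ρ] {T : α ≃ᵐ α} {U : β → β} (hU : Measurable U)
    (hρ : ρ.map (Prod.map T U) = ρ) :
    (ρ.condKernel.map U).comap T.symm T.symm.measurable =ᵐ[ρ.fst] ρ.condKernel := by
  have := Kernel.IsMarkovKernel.map ρ.condKernel hU
  rw [← Kernel.compProd_eq_iff,
    ← map_prodMap_compProd (measurePreserving_fst_of_map_prodMap T.measurable hU hρ) _ hU,
    ρ.disintegrate, hρ]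

variable [StandardBorelSpace β] [Nonempty β] [StandardBorelSpace γ] [Nonempty γ]

/-- The relatively independent joining of `ρ` and `ξ` over their first coordinate. -/
noncomputable def MeasureTheory.Measure.relProd (ρ : Measure (α × β)) [IsFiniteMeasure ρ]
    (ξ : Measure (α × γ)) [IsFiniteMeasure ξ] : Measure (α × β × γ) :=
  ρ.fst ⊗ₘ (ρ.condKernel ×ₖ ξ.condKernel)

namespace MeasureTheory.Measure

variable (ρ : Measure (α × β)) [IsFiniteMeasure ρ] (ξ : Measure (α × γ)) [IsFiniteMeasure ξ]

instance [IsProbabilityMeasure ρ] : IsProbabilityMeasure (ρ.relProd ξ) := by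
  unfold relProd; infer_instance

theorem map_prodMap_fst_relProd : (ρ.relProd ξ).map (Prod.map id Prod.fst) = ρ := by
  rw [relProd, ← compProd_map measurable_fst, ← Kernel.fst_eq, Kernel.fst_prod, ρ.disintegrate]

theorem map_prodMap_snd_relProd (h : ρ.fst = ξ.fst) :
    (ρ.relProd ξ).map (Prod.map id Prod.snd) = ξ := by
  rw [relProd, ← compProd_map measurable_snd, ← Kernel.snd_eq, Kernel.snd_prod, h, ξ.disintegrate]

theorem map_prodMap_relProd {T : α ≃ᵐ α} {U : β → β} {V : γ → γ} (hU : Measurable U)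
    (hV : Measurable V) (hρ : ρ.map (Prod.map T U) = ρ) (hξ : ξ.map (Prod.map T V) = ξ)
    (h : ρ.fst = ξ.fst) :
    (ρ.relProd ξ).map (Prod.map T (Prod.map U V)) = ρ.relProd ξ := by
  rw [relProd, map_prodMap_compProd (measurePreserving_fst_of_map_prodMap T.measurable hU hρ) _
    (hU.prodMap hV)]
  refine compProd_congr ?_
  filter_upwards [condKernel_map_comap_ae_eq hU hρ, h ▸ condKernel_map_comap_ae_eq hV hξ]
    with x hρx hξx
  rw [Kernel.prod_apply, ← hρx, ← hξx]
  simp only [Kernel.comap_apply, Kernel.map_apply _ (hU.prodMap hV), Kernel.map_apply _ hU,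
    Kernel.map_apply _ hV, Kernel.prod_apply, Measure.map_prod_map _ _ hU hV]

end MeasureTheory.Measure

end RelativeProduct

section Joinings

variable {α β γ : Type*} [MeasurableSpace α] [MeasurableSpace β] [MeasurableSpace γ]

theorem IsJoining.swap {T : α → α} (hT : Measurable T) {μ ν : Measure α} {σ : Measure (α × α)}
    (h : IsJoining T μ ν σ) : IsJoining2 T T ν μ (σ.map Prod.swap) := by
  obtain ⟨hσ, hinv, hfst, hsnd⟩ := h
  refine ⟨Measure.isProbabilityMeasure_map measurable_swap.aemeasurable, ?_, ?_, ?_⟩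
  · rw [Measure.map_map (hT.prodMap hT) measurable_swap]
    change Measure.map (Prod.swap ∘ Prod.map T T) σ = _
    rw [← Measure.map_map measurable_swap (hT.prodMap hT), hinv]
  · rwa [Measure.map_map measurable_fst measurable_swap]
  · rwa [Measure.map_map measurable_snd measurable_swap]

theorem isJoining_prod_s19 {T : α → α} (hT : Measurable T) {μ ν : Measure α} [IsProbabilityMeasure μ]
    [IsProbabilityMeasure ν] (hμ : μ.map T = μ) (hν : ν.map T = ν) :
    IsJoining T μ ν (μ.prod ν) := by
  refine ⟨inferInstance, ?_, by simp, by simp⟩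
  rw [← Measure.map_prod_map _ _ hT hT, hμ, hν]

variable [StandardBorelSpace β] [Nonempty β] [StandardBorelSpace γ] [Nonempty γ]

theorem IsJoining2.exists_relProd {T : α ≃ᵐ α} {U : β → β} {V : γ → γ} (hU : Measurable U)
    (hV : Measurable V) {μ : Measure α} {μ₁ : Measure β} {μ₂ : Measure γ}
    {ρ : Measure (α × β)} {ξ : Measure (α × γ)} (hρ : IsJoining2 T U μ μ₁ ρ)
    (hξ : IsJoining2 T V μ μ₂ ξ) :
    ∃ θ : Measure (α × β × γ), IsProbabilityMeasure θ ∧ θ.map (Prod.map id Prod.fst) = ρ ∧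
      θ.map (Prod.map id Prod.snd) = ξ ∧ IsJoining2 U V μ₁ μ₂ (θ.map Prod.snd) := by
  obtain ⟨hρP, hρinv, hρfst, hρsnd⟩ := hρ
  obtain ⟨hξP, hξinv, hξfst, hξsnd⟩ := hξ
  have hfst : ρ.fst = ξ.fst := hρfst.trans hξfst.symm
  have h₁ := ρ.map_prodMap_fst_relProd ξ
  have h₂ := ρ.map_prodMap_snd_relProd ξ hfst
  refine ⟨ρ.relProd ξ, inferInstance, h₁, h₂, ?_, ?_, ?_, ?_⟩
  · exact Measure.isProbabilityMeasure_map measurable_snd.aemeasurable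
  · rw [Measure.map_map (hU.prodMap hV) measurable_snd]
    change Measure.map (Prod.snd ∘ Prod.map T (Prod.map U V)) _ = _
    rw [← Measure.map_map measurable_snd (T.measurable.prodMap (hU.prodMap hV)),
      ρ.map_prodMap_relProd ξ hU hV hρinv hξinv hfst]
  · rw [Measure.map_map measurable_fst measurable_snd, ← hρsnd,
      ← congrArg (Measure.map Prod.snd) h₁,
      Measure.map_map measurable_snd (measurable_id.prodMap measurable_fst)]
    rfl
  · rw [Measure.map_map measurable_snd measurable_snd, ← hξsnd,
      ← congrArg (Measure.map Prod.snd) h₂,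
      Measure.map_map measurable_snd (measurable_id.prodMap measurable_snd)]
    rfl

end Joinings

theorem MeasureTheory.Measure.eq_prod_of_forall_map_fst_restrict {α β : Type*}
    [MeasurableSpace α] [MeasurableSpace β] {ξ : Measure (α × β)} {μ : Measure α}
    {ν : Measure β} [SigmaFinite μ] [SigmaFinite ν]
    (h : ∀ t, MeasurableSet t → (ξ.restrict (univ ×ˢ t)).map Prod.fst = ν t • μ) :
    ξ = μ.prod ν := by
  refine (prod_eq fun s t hs ht => ?_).symm
  have hst := congrArg (· s) (h t ht)
  simp only [map_apply measurable_fst hs, restrict_apply (measurable_fst hs), smul_apply,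
    smul_eq_mul] at hst
  rw [mul_comm, ← hst]
  congr 1
  ext; simp

section Lipschitz

variable {α : Type*} [PseudoMetricSpace α] [MeasurableSpace α]

theorem MeasureTheory.ext_of_forall_lipschitz_integral_eq [BorelSpace α] {μ ν : Measure α}
    [IsFiniteMeasure μ] [IsFiniteMeasure ν]
    (h : ∀ (f : α → ℝ) (K : ℝ≥0) (C : ℝ), LipschitzWith K f → (∀ x, |f x| ≤ C) →
      ∫ x, f x ∂μ = ∫ x, f x ∂ν) : μ = ν := by
  have hδ : ∀ n : ℕ, 0 < 1 / ((n : ℝ) + 1) := fun n => by positivity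
  have hclosed : ∀ F : Set α, IsClosed F → μ F = ν F := by
    intro F hF
    have hμ := tendsto_integral_thickenedIndicator_of_isClosed μ hF hδ
      tendsto_one_div_add_atTop_nhds_zero_nat
    have hν := tendsto_integral_thickenedIndicator_of_isClosed ν hF hδ
      tendsto_one_div_add_atTop_nhds_zero_nat
    have hint : ∀ n, ∫ x, (thickenedIndicator (hδ n) F x : ℝ) ∂μ
        = ∫ x, (thickenedIndicator (hδ n) F x : ℝ) ∂ν := fun n =>
      h _ _ 1 (NNReal.isometry_coe.lipschitz.comp (lipschitzWith_thickenedIndicator (hδ n) F))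
        fun x => by simpa using thickenedIndicator_le_one (hδ n) F x
    simp only [hint] at hμ
    exact (measureReal_eq_measureReal_iff).mp (tendsto_nhds_unique hμ hν)
  exact ext_of_generate_finite {s | IsClosed s}
    (BorelSpace.measurable_eq.trans borel_eq_generateFrom_isClosed) isPiSystem_isClosed
    hclosed (hclosed univ isClosed_univ)

theorem integrable_dist_of_boundedSpace [BoundedSpace α] [SecondCountableTopology α]
    [OpensMeasurableSpace α] (π : Measure (α × α)) [IsFiniteMeasure π] :
    Integrable (fun p : α × α => dist p.1 p.2) π :=
  .of_bound continuous_dist.aestronglyMeasurable (Metric.diam (univ : Set α))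
    (ae_of_all _ fun p => by
      rw [Real.norm_of_nonneg dist_nonneg]
      exact Metric.dist_le_diam_of_mem (Bornology.IsBounded.all _) (mem_univ _) (mem_univ _))

theorem abs_integral_map_fst_sub_integral_map_snd_le [OpensMeasurableSpace α]
    {π : Measure (α × α)} [IsFiniteMeasure π] {f : α → ℝ} {K : ℝ≥0} {C : ℝ}
    (hf : LipschitzWith K f) (hfC : ∀ x, |f x| ≤ C)
    (hπ : Integrable (fun p : α × α => dist p.1 p.2) π) :
    |∫ x, f x ∂π.map Prod.fst - ∫ x, f x ∂π.map Prod.snd| ≤ K * ∫ p, dist p.1 p.2 ∂π := by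
  have hfm : Measurable f := hf.continuous.measurable
  have hint : ∀ {g : α × α → α}, Measurable g → Integrable (fun p => f (g p)) π :=
    fun hg => .of_bound (hfm.comp hg).aestronglyMeasurable C (ae_of_all _ fun p => hfC _)
  rw [integral_map measurable_fst.aemeasurable hfm.aestronglyMeasurable,
    integral_map measurable_snd.aemeasurable hfm.aestronglyMeasurable,
    ← integral_sub (hint measurable_fst) (hint measurable_snd), ← integral_const_mul]
  refine (abs_integral_le_integral_abs).trans
    (integral_mono ((hint measurable_fst).sub (hint measurable_snd)).abs (hπ.const_mul _)
      fun p => ?_)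
  simpa only [Real.dist_eq] using hf.dist_le_mul p.1 p.2

end Lipschitz

theorem abs_integral_map_fst_restrict_sub_le {X Y : Type*} [PseudoMetricSpace X] [BoundedSpace X]
    [SecondCountableTopology X] [MeasurableSpace X] [BorelSpace X] [MeasurableSpace Y]
    {θ : Measure (X × X × Y)} [IsFiniteMeasure θ] {μ' : Measure X} [SFinite μ'] {ν : Measure Y}
    [IsProbabilityMeasure ν] (hθ : θ.map Prod.snd = μ'.prod ν) {B : Set Y}
    (hB : MeasurableSet B) {f : X → ℝ} {K : ℝ≥0} {C : ℝ} (hf : LipschitzWith K f)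
    (hfC : ∀ x, |f x| ≤ C) :
    |∫ x, f x ∂(θ.restrict {q | q.2.2 ∈ B}).map Prod.fst - ν.real B * ∫ x, f x ∂θ.map Prod.fst|
      ≤ 2 * K * ∫ p, dist p.1 p.2 ∂θ.map (Prod.map id Prod.fst) := by
  set E : Set (X × X × Y) := {q | q.2.2 ∈ B}
  have hp : Measurable (Prod.map id Prod.fst : X × X × Y → X × X) :=
    measurable_id.prodMap measurable_fst
  set π := θ.map (Prod.map id Prod.fst)
  set πE := (θ.restrict E).map (Prod.map id Prod.fst)
  have hπE_fst : πE.map Prod.fst = (θ.restrict E).map Prod.fst := by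
    rw [Measure.map_map measurable_fst hp]; rfl
  have hπE_snd : πE.map Prod.snd = ν B • μ' := by
    have hE : E = Prod.snd ⁻¹' (univ ×ˢ B) := by ext; simp [E]
    rw [Measure.map_map measurable_snd hp, hE, show Prod.snd ∘ Prod.map id Prod.fst
        = Prod.fst ∘ (Prod.snd : X × X × Y → X × Y) from rfl,
      ← Measure.map_map measurable_fst measurable_snd,
      ← Measure.restrict_map measurable_snd (MeasurableSet.univ.prod hB), hθ,
      ← Measure.prod_restrict, Measure.restrict_univ, Measure.map_fst_prod,
      Measure.restrict_apply_univ]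
  have hπ_fst : π.map Prod.fst = θ.map Prod.fst := by
    rw [Measure.map_map measurable_fst hp]; rfl
  have hπ_snd : π.map Prod.snd = μ' := by
    rw [Measure.map_map measurable_snd hp, show Prod.snd ∘ Prod.map id Prod.fst
        = Prod.fst ∘ (Prod.snd : X × X × Y → X × Y) from rfl,
      ← Measure.map_map measurable_fst measurable_snd, hθ, Measure.map_fst_prod]
    simp
  have hE_bound := abs_integral_map_fst_sub_integral_map_snd_le (π := πE) hf hfC
    (integrable_dist_of_boundedSpace _)
  have h_bound := abs_integral_map_fst_sub_integral_map_snd_le (π := π) hf hfC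
    (integrable_dist_of_boundedSpace _)
  rw [hπE_fst, hπE_snd, integral_smul_measure, smul_eq_mul] at hE_bound
  rw [hπ_fst, hπ_snd, abs_sub_comm] at h_bound
  have hdist : ∫ p, dist p.1 p.2 ∂πE ≤ ∫ p, dist p.1 p.2 ∂π :=
    integral_mono_measure (Measure.map_mono Measure.restrict_le_self hp)
      (ae_of_all _ fun _ => dist_nonneg) (integrable_dist_of_boundedSpace _)
  set c := ν.real B
  calc _ ≤ |∫ x, f x ∂(θ.restrict E).map Prod.fst - c * ∫ x, f x ∂μ'|
        + |c * ∫ x, f x ∂μ' - c * ∫ x, f x ∂θ.map Prod.fst| := abs_sub_le _ _ _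
    _ = |∫ x, f x ∂(θ.restrict E).map Prod.fst - c * ∫ x, f x ∂μ'|
        + c * |∫ x, f x ∂μ' - ∫ x, f x ∂θ.map Prod.fst| := by
      rw [← mul_sub, abs_mul, abs_of_nonneg measureReal_nonneg]
    _ ≤ K * ∫ p, dist p.1 p.2 ∂πE + 1 * (K * ∫ p, dist p.1 p.2 ∂π) :=
      add_le_add hE_bound (mul_le_mul measureReal_le_one h_bound (abs_nonneg _) zero_le_one)
    _ ≤ 2 * K * ∫ p, dist p.1 p.2 ∂π := by
      nlinarith [mul_le_mul_of_nonneg_left hdist K.coe_nonneg]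

theorem le_mul_rhoBar {X : Type*} [MetricSpace X] [MeasurableSpace X] {T : X → X}
    {μ ν : Measure X} {a c : ℝ} (hc : 0 ≤ c) (hne : ∃ σ, IsJoining T μ ν σ)
    (h : ∀ σ, IsJoining T μ ν σ → a ≤ c * ∫ p, dist p.1 p.2 ∂σ) : a ≤ c * rhoBar T μ ν := by
  obtain ⟨σ, hσ⟩ := hne
  rw [rhoBar, ← smul_eq_mul, ← Real.sInf_smul_of_nonneg hc]
  refine le_csInf ⟨_, Set.smul_mem_smul_set ⟨σ, hσ, rfl⟩⟩ ?_
  rintro _ ⟨_, ⟨σ, hσ, rfl⟩, rfl⟩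
  exact h σ hσ

theorem abs_integral_map_fst_restrict_sub_le_rhoBar {X Y : Type*} [MetricSpace X]
    [CompactSpace X] [MeasurableSpace X] [BorelSpace X] [MeasurableSpace Y] [StandardBorelSpace Y]
    {T : X ≃ᵐ X} {S : Y → Y} (hS : Measurable S) {μ' μ : Measure X} [IsProbabilityMeasure μ']
    [IsProbabilityMeasure μ] (hμ' : μ'.map T = μ') (hμ : μ.map T = μ) {ν : Measure Y}
    [IsProbabilityMeasure ν] (hdisj : ∀ ξ, IsJoining2 T S μ' ν ξ → ξ = μ'.prod ν)
    {lam : Measure (X × Y)} (hlam : IsJoining2 T S μ ν lam) {B : Set Y} (hB : MeasurableSet B)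
    {f : X → ℝ} {K : ℝ≥0} {C : ℝ} (hf : LipschitzWith K f) (hfC : ∀ x, |f x| ≤ C) :
    |∫ x, f x ∂(lam.restrict (univ ×ˢ B)).map Prod.fst - ν.real B * ∫ x, f x ∂μ|
      ≤ 2 * K * rhoBar T μ' μ := by
  have := nonempty_of_isProbabilityMeasure μ
  have := nonempty_of_isProbabilityMeasure ν
  refine le_mul_rhoBar (by positivity) ⟨_, isJoining_prod_s19 T.measurable hμ' hμ⟩ fun σ hσ => ?_
  have hσ' := hσ.swap T.measurable
  obtain ⟨θ, hθP, hθσ, hθlam, hθJ⟩ := hσ'.exists_relProd T.measurable hS hlam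
  have hθfst : θ.map Prod.fst = μ := by
    rw [← hσ'.2.2.1, ← hθσ, Measure.map_map measurable_fst (measurable_id.prodMap measurable_fst)]
    rfl
  have hθB : (θ.restrict {q | q.2.2 ∈ B}).map Prod.fst
      = (lam.restrict (univ ×ˢ B)).map Prod.fst := by
    rw [← hθlam, Measure.restrict_map (measurable_id.prodMap measurable_snd)
      (MeasurableSet.univ.prod hB), Measure.map_map measurable_fst
      (measurable_id.prodMap measurable_snd)]
    congr 2
    ext; simp
  have hdist : ∫ p, dist p.1 p.2 ∂σ.map Prod.swap = ∫ p, dist p.1 p.2 ∂σ := by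
    rw [integral_map measurable_swap.aemeasurable continuous_dist.aestronglyMeasurable]
    exact integral_congr_ae (ae_of_all _ fun p => dist_comm _ _)
  have := abs_integral_map_fst_restrict_sub_le (hdisj _ hθJ) hB hf hfC
  rwa [hθfst, hθB, hθσ, hdist] at this

theorem stmt19_general {X Y : Type*}
    [MetricSpace X] [CompactSpace X] [MeasurableSpace X] [BorelSpace X]
    [MetricSpace Y] [CompactSpace Y] [MeasurableSpace Y] [BorelSpace Y]
    (T : X ≃ₜ X) (S : Y ≃ₜ Y)
    (ν : Measure Y) [IsProbabilityMeasure ν]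
    (μm : ℕ → Measure X) (hm : ∀ m, IsProbabilityMeasure (μm m))
    (herg : ∀ m, Ergodic (⇑T) (μm m))
    (hdisj : ∀ m, ∀ lam : Measure (X × Y),
      IsJoining2 (⇑T) (⇑S) (μm m) ν lam → lam = (μm m).prod ν)
    (μ : Measure X) [IsProbabilityMeasure μ] (hμinv : Measure.map (⇑T) μ = μ)
    (hconv : Tendsto (fun m => rhoBar (⇑T) (μm m) μ) atTop (nhds 0)) :
    ∀ lam : Measure (X × Y), IsJoining2 (⇑T) (⇑S) μ ν lam →
      Ergodic (Prod.map (⇑T) (⇑S)) lam → lam = μ.prod ν := by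
  intro lam hlam _
  have := hlam.1
  refine Measure.eq_prod_of_forall_map_fst_restrict fun B hB => ?_
  have := μ.smul_finite (measure_ne_top ν B)
  refine ext_of_forall_lipschitz_integral_eq fun f K C hf hfC => ?_
  rw [integral_smul_measure, smul_eq_mul]
  have hbound : ∀ m, |∫ x, f x ∂(lam.restrict (univ ×ˢ B)).map Prod.fst - ν.real B * ∫ x, f x ∂μ|
      ≤ 2 * K * rhoBar T (μm m) μ := fun m =>
    have := hm m
    abs_integral_map_fst_restrict_sub_le_rhoBar (T := T.toMeasurableEquiv) S.continuous.measurable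
      (herg m).map_eq hμinv (hdisj m) hlam hB hf hfC
  have hlim : Tendsto (fun m => 2 * K * rhoBar T (μm m) μ) atTop (nhds 0) := by
    simpa using hconv.const_mul (2 * (K : ℝ))
  exact sub_eq_zero.mp (abs_nonpos_iff.mp (ge_of_tendsto' hlim hbound))

/-- disjointness from (strictly ergodic models of) ergodic members
of a class is preserved under `ρ̄`-limits: if each `μ_m` is disjoint from `ν`,
the unique invariant measure of a strictly ergodic system `(Y,S)`, and
`ρ̄(μ_m,μ) → 0`, then every ergodic joining of `μ` and `ν` is the product. -/
theorem stmt19 {X Y : Type*}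
    [MetricSpace X] [CompactSpace X] [MeasurableSpace X] [BorelSpace X]
    [MetricSpace Y] [CompactSpace Y] [MeasurableSpace Y] [BorelSpace Y]
    (T : X ≃ₜ X) (S : Y ≃ₜ Y)
    (ν : Measure Y) [IsProbabilityMeasure ν] (hνinv : Measure.map (⇑S) ν = ν)
    (hνerg : Ergodic (⇑S) ν)
    (hstrict : ∀ ν' : Measure Y, IsProbabilityMeasure ν' → Measure.map (⇑S) ν' = ν' → ν' = ν)
    (μm : ℕ → Measure X) (hm : ∀ m, IsProbabilityMeasure (μm m))
    (herg : ∀ m, Ergodic (⇑T) (μm m))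
    (hdisj : ∀ m, ∀ lam : Measure (X × Y),
      IsJoining2 (⇑T) (⇑S) (μm m) ν lam → lam = (μm m).prod ν)
    (μ : Measure X) [IsProbabilityMeasure μ] (hμinv : Measure.map (⇑T) μ = μ)
    (hconv : Tendsto (fun m => rhoBar (⇑T) (μm m) μ) atTop (nhds 0)) :
    ∀ lam : Measure (X × Y), IsJoining2 (⇑T) (⇑S) μ ν lam →
      Ergodic (Prod.map (⇑T) (⇑S)) lam → lam = μ.prod ν :=
  stmt19_general T S ν μm hm herg hdisj μ hμinv hconv
end
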